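/- (Theorem 1: equivalence of MMD maximisation and constrained 2-means minimisation.) Let S be a nonempty finite indexed family of points in a real inner product space H, and let m be an integer with 0 < m < |S|. Consider all partitions of S into two disjoint nonempty subfamilies T and V with |V| = m. Then for any two such partitions (T, V) and (T′, V′), one has ‖μ_T − μ_V‖ ≥ ‖μ_{T′} − μ_{V′}‖ if and only if Ψ(T, V) ≤ Ψ(T′, V′). Consequently, a partition with |V| = m maximises ‖μ_T − μ_V‖ over all such partitions if and only if it minimises Ψ(T, V) over all such partitions. -/

import Mathlib

/-!
By the parallel-axis theorem, the scatter of a disjoint union splits as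
`SSQ(T ∪ V) = Ψ(T, V) + |T| |V| / (|T| + |V|) · ‖μ_T - μ_V‖²`.
Over the partitions of a fixed `S` with `|V| = m`, both `SSQ(S)` and the weight
`|T| |V| / (|T| + |V|) > 0` are constant, so `Ψ` decreases exactly as the MMD increases.
-/

open Finset

variable {ι H : Type*} [DecidableEq ι] [NormedAddCommGroup H] [InnerProductSpace ℝ H]

/-- The centroid of the finite indexed family of points `f i`, `i ∈ A`. -/
noncomputable def centroid (f : ι → H) (A : Finset ι) : H :=
  (A.card : ℝ)⁻¹ • ∑ i ∈ A, f i

/-- The sum of squared deviations of the family `f i`, `i ∈ A` from its centroid. -/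
noncomputable def SSQ (f : ι → H) (A : Finset ι) : ℝ :=
  ∑ i ∈ A, ‖f i - centroid f A‖ ^ 2

/-- The two-cluster k-means objective `Ψ(T,V) = SSQ(T) + SSQ(V)`. -/
noncomputable def Psi (f : ι → H) (T V : Finset ι) : ℝ :=
  SSQ f T + SSQ f V

omit [DecidableEq ι] in
theorem card_smul_centroid (f : ι → H) (A : Finset ι) :
    (#A : ℝ) • centroid f A = ∑ i ∈ A, f i := by
  rcases A.eq_empty_or_nonempty with rfl | hA
  · simp
  · rw [_root_.centroid, smul_inv_smul₀ (by exact_mod_cast hA.card_pos.ne')]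

omit [DecidableEq ι] in
theorem sum_sub_centroid (f : ι → H) (A : Finset ι) :
    ∑ i ∈ A, (f i - centroid f A) = 0 := by
  rw [sum_sub_distrib, sum_const, ← Nat.cast_smul_eq_nsmul ℝ, card_smul_centroid, sub_self]

omit [DecidableEq ι] in
theorem sum_norm_sub_sq_eq_SSQ_add (f : ι → H) (A : Finset ι) (c : H) :
    ∑ i ∈ A, ‖f i - c‖ ^ 2 = SSQ f A + #A * ‖centroid f A - c‖ ^ 2 := by
  have hsplit (i : ι) : ‖f i - c‖ ^ 2 = ‖f i - centroid f A‖ ^ 2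
      + 2 * inner ℝ (f i - centroid f A) (centroid f A - c) + ‖centroid f A - c‖ ^ 2 := by
    rw [← norm_add_sq_real, sub_add_sub_cancel]
  simp only [hsplit, sum_add_distrib, ← mul_sum, ← sum_inner, sum_sub_centroid, inner_zero_left,
    mul_zero, add_zero, sum_const, nsmul_eq_mul, SSQ]

theorem centroid_union (f : ι → H) {T V : Finset ι} (hd : Disjoint T V) :
    centroid f (T ∪ V) =
      (#T + #V : ℝ)⁻¹ • ((#T : ℝ) • centroid f T + (#V : ℝ) • centroid f V) := by
  rw [_root_.centroid, card_smul_centroid, card_smul_centroid, sum_union hd,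
    card_union_of_disjoint hd, Nat.cast_add]

theorem SSQ_union_eq_Psi_add (f : ι → H) {T V : Finset ι} (hd : Disjoint T V) :
    SSQ f (T ∪ V) =
      Psi f T V + (#T * #V / (#T + #V) : ℝ) * ‖centroid f T - centroid f V‖ ^ 2 := by
  rcases (T ∪ V).eq_empty_or_nonempty with h | h
  · obtain ⟨rfl, rfl⟩ := union_eq_empty.mp h
    simp [Psi, SSQ]
  have hn : (#T + #V : ℝ) ≠ 0 := by
    rw [← Nat.cast_add, ← card_union_of_disjoint hd]; exact_mod_cast h.card_pos.ne'
  have hT : centroid f T - centroid f (T ∪ V) =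
      (#V / (#T + #V) : ℝ) • (centroid f T - centroid f V) := by
    rw [centroid_union f hd]
    match_scalars <;> field_simp; ring
  have hV : centroid f V - centroid f (T ∪ V) =
      (#T / (#T + #V) : ℝ) • (centroid f V - centroid f T) := by
    rw [centroid_union f hd]
    match_scalars <;> field_simp; ring
  rw [SSQ, sum_union hd, sum_norm_sub_sq_eq_SSQ_add, sum_norm_sub_sq_eq_SSQ_add, hT, hV,
    norm_smul, norm_smul, norm_sub_rev (centroid f V), Psi]
  simp only [Real.norm_eq_abs, mul_pow, sq_abs]
  field_simp
  ring

theorem Psi_le_Psi_iff (f : ι → H) {T V T' V' : Finset ι} (hd : Disjoint T V)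
    (hd' : Disjoint T' V') (hu : T' ∪ V' = T ∪ V) (hcard : #V' = #V) (hT : T.Nonempty)
    (hV : V.Nonempty) :
    Psi f T V ≤ Psi f T' V' ↔
      ‖centroid f T' - centroid f V'‖ ≤ ‖centroid f T - centroid f V‖ := by
  have hcardT : #T' = #T := by
    have := congrArg card hu
    rw [card_union_of_disjoint hd, card_union_of_disjoint hd', hcard] at this
    omega
  have hw : (0 : ℝ) < #T * #V / (#T + #V) := by
    have := hT.card_pos; have := hV.card_pos; positivity
  have hsplit := SSQ_union_eq_Psi_add f hd
  have hsplit' := SSQ_union_eq_Psi_add f hd'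
  rw [hu, hcardT, hcard] at hsplit'
  have hPsi : Psi f T V ≤ Psi f T' V' ↔
      (#T * #V / (#T + #V) : ℝ) * ‖centroid f T' - centroid f V'‖ ^ 2
        ≤ (#T * #V / (#T + #V) : ℝ) * ‖centroid f T - centroid f V‖ ^ 2 := by
    constructor <;> intro <;> linarith
  rw [hPsi, mul_le_mul_iff_right₀ hw, pow_le_pow_iff_left₀ (norm_nonneg _) (norm_nonneg _)
    two_ne_zero]

theorem mmd_max_iff_kmeans_min_general (f : ι → H) (S : Finset ι) (m : ℕ) :
    (∀ T V T' V' : Finset ι,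
      Disjoint T V → T ∪ V = S → T.Nonempty → V.Nonempty → V.card = m →
      Disjoint T' V' → T' ∪ V' = S → T'.Nonempty → V'.Nonempty → V'.card = m →
      (‖centroid f T - centroid f V‖ ≥ ‖centroid f T' - centroid f V'‖ ↔
        Psi f T V ≤ Psi f T' V')) ∧
    (∀ T V : Finset ι,
      Disjoint T V → T ∪ V = S → T.Nonempty → V.Nonempty → V.card = m →
      ((∀ T' V' : Finset ι,
          Disjoint T' V' → T' ∪ V' = S → T'.Nonempty → V'.Nonempty → V'.card = m →
          ‖centroid f T' - centroid f V'‖ ≤ ‖centroid f T - centroid f V‖) ↔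
        (∀ T' V' : Finset ι,
          Disjoint T' V' → T' ∪ V' = S → T'.Nonempty → V'.Nonempty → V'.card = m →
          Psi f T V ≤ Psi f T' V'))) := by
  refine ⟨fun T V T' V' hd hu hT hV hVm hd' hu' _ _ hVm' => ?_,
    fun T V hd hu hT hV hVm => ⟨fun hmax T' V' hd' hu' hT' hV' hVm' => ?_,
      fun hmin T' V' hd' hu' hT' hV' hVm' => ?_⟩⟩
  · rw [Psi_le_Psi_iff f hd hd' (hu'.trans hu.symm) (hVm'.trans hVm.symm) hT hV, ge_iff_le]
  · exact (Psi_le_Psi_iff f hd hd' (hu'.trans hu.symm) (hVm'.trans hVm.symm) hT hV).mpr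
      (hmax T' V' hd' hu' hT' hV' hVm')
  · exact (Psi_le_Psi_iff f hd hd' (hu'.trans hu.symm) (hVm'.trans hVm.symm) hT hV).mp
      (hmin T' V' hd' hu' hT' hV' hVm')

/-- Theorem 1: for partitions of `S` into two disjoint nonempty clusters `T, V`
with prescribed validation size `|V| = m`, the MMD `‖μ_T − μ_V‖` is monotonically
decreasing in the k-means objective `Ψ(T,V)`; consequently a partition maximises
the MMD over all such partitions iff it minimises `Ψ`. -/
theorem mmd_max_iff_kmeans_min (f : ι → H) (S : Finset ι) (hS : S.Nonempty)
    (m : ℕ) (hm : 0 < m) (hmS : m < S.card) :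
    (∀ T V T' V' : Finset ι,
      Disjoint T V → T ∪ V = S → T.Nonempty → V.Nonempty → V.card = m →
      Disjoint T' V' → T' ∪ V' = S → T'.Nonempty → V'.Nonempty → V'.card = m →
      (‖centroid f T - centroid f V‖ ≥ ‖centroid f T' - centroid f V'‖ ↔
        Psi f T V ≤ Psi f T' V')) ∧
    (∀ T V : Finset ι,
      Disjoint T V → T ∪ V = S → T.Nonempty → V.Nonempty → V.card = m →
      ((∀ T' V' : Finset ι,
          Disjoint T' V' → T' ∪ V' = S → T'.Nonempty → V'.Nonempty → V'.card = m →
          ‖centroid f T' - centroid f V'‖ ≤ ‖centroid f T - centroid f V‖) ↔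
        (∀ T' V' : Finset ι,
          Disjoint T' V' → T' ∪ V' = S → T'.Nonempty → V'.Nonempty → V'.card = m →
          Psi f T V ≤ Psi f T' V'))) :=
  mmd_max_iff_kmeans_min_general f S m
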